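/- If f : ℝ^{2n} → ℝ^{2n} is an invertible linear map whose transpose-conjugation Fᵀ M_L F is symplectic for every matrix M_L = [[L⁻¹, 0], [0, L]] with L symmetric positive definite, where F = f viewed as a matrix, then F is either symplectic (FᵀJF = J) or antisymplectic (FᵀJF = -J). -/

import Mathlib

/-!
Put `G = F J Fᵀ`. The hypothesis for `L = 1` says `Fᵀ G F = J`; since `F` is invertible, the
hypothesis for arbitrary `L` then says `M_L G M_L = G`. Blockwise, the diagonal blocks of `G`
vanish (take `L = 2`), and the upper right block commutes with every positive definite `L`, hence
with every Gram matrix `C Cᵀ`, hence with every matrix unit, so it is a scalar `s`. As `G` is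
skew, `G = s J`. Finally `s • Fᵀ J F = J` and `F J Fᵀ = s J` give `-J = J³ = -s² J`, so `s = ±1`.
-/

open Matrix

noncomputable def J (n : ℕ) : Matrix (Fin n ⊕ Fin n) (Fin n ⊕ Fin n) ℝ :=
  fromBlocks 0 1 (-1) 0

theorem J_eq_neg_Matrix_J (n : ℕ) : J n = -Matrix.J (Fin n) ℝ := by
  simp [_root_.J, Matrix.J, fromBlocks_neg]

theorem J_transpose (n : ℕ) : (J n)ᵀ = -J n := by
  simp [J_eq_neg_Matrix_J]

theorem J_mul_J (n : ℕ) : J n * J n = -1 := by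
  simp [J_eq_neg_Matrix_J, J_squared]

theorem J_ne_zero {n : ℕ} (hn : 0 < n) : J n ≠ 0 := fun h ↦ by
  simpa [_root_.J] using congrFun₂ h (.inl ⟨0, hn⟩) (.inr ⟨0, hn⟩)

section

variable {m : Type*} [Fintype m] [DecidableEq m]

theorem eq_of_transpose_mul_mul_eq {R : Type*} [CommRing R] {F X Y : Matrix m m R}
    (hF : IsUnit F.det) (h : Fᵀ * X * F = Fᵀ * Y * F) : X = Y := by
  have hF' : IsUnit F := (isUnit_iff_isUnit_det F).mpr hF
  exact ((isUnit_transpose F).mpr hF').mul_left_cancel (hF'.mul_right_cancel h)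

theorem eq_zero_of_forall_posDef_mul_mul_eq {X : Matrix m m ℝ}
    (hX : ∀ L : Matrix m m ℝ, L.PosDef → L * X * L = X) : X = 0 := by
  have h4 : (4 : ℝ) • X = X := by
    simpa [smul_smul, show (2 : ℝ) * 2 = 4 by norm_num] using
      hX ((2 : ℝ) • 1) (PosDef.one.smul two_pos)
  have h3 : (3 : ℝ) • X = 0 := by
    rw [show (3 : ℝ) = 4 - 1 by norm_num, sub_smul, one_smul, h4, sub_self]
  exact (smul_eq_zero.mp h3).resolve_left three_ne_zero

theorem exists_eq_smul_one_of_forall_posDef_commute {B : Matrix m m ℝ}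
    (hB : ∀ L : Matrix m m ℝ, L.PosDef → Commute B L) : ∃ s : ℝ, B = s • 1 := by
  have hGram : ∀ C : Matrix m m ℝ, Commute B (C * Cᵀ) := fun C ↦ by
    have hpd : (C * Cᵀ + 1).PosDef := by
      simpa using PosDef.posSemidef_add (posSemidef_self_mul_conjTranspose C) PosDef.one
    simpa using (hB _ hpd).sub_right (Commute.one_right B)
  obtain ⟨s, hs⟩ := mem_range_scalar_of_commute_single (M := B) fun i j hij ↦ by
    have hsingle : single i j (1 : ℝ) = single i i 1 * (single i i 1)ᵀ *
        ((single i i 1 + single j i 1) * (single i i 1 + single j i 1)ᵀ) -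
        single i i 1 * (single i i 1)ᵀ := by
      have h0 (k : m) : single i i (1 : ℝ) * single j k 1 = 0 :=
        single_mul_single_of_ne 1 i i j hij 1
      simp [transpose_single, add_mul, mul_add, h0]
    change Commute _ B
    rw [hsingle]
    exact (((hGram _).mul_right (hGram _)).sub_right (hGram _)).symm
  exact ⟨s, by simp [← hs, smul_one_eq_diagonal]⟩

end

theorem mul_self_eq_one_of_conj_J {n : ℕ} (hn : 0 < n)
    {F : Matrix (Fin n ⊕ Fin n) (Fin n ⊕ Fin n) ℝ} {s : ℝ}
    (h₁ : F * J n * Fᵀ = s • J n) (h₂ : s • (Fᵀ * J n * F) = J n) : s * s = 1 := by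
  have key : -J n = -((s * s) • J n) := calc
    -J n = J n * J n * J n := by rw [J_mul_J, Matrix.neg_mul, Matrix.one_mul]
    _ = s • (Fᵀ * J n * F) * J n * (s • (Fᵀ * J n * F)) := by rw [h₂]
    _ = (s * s) • (Fᵀ * J n * (F * J n * Fᵀ) * J n * F) := by
      simp only [Matrix.smul_mul, Matrix.mul_smul, smul_smul, Matrix.mul_assoc]
    _ = (s * s * s) • (Fᵀ * (J n * J n * J n) * F) := by
      simp only [h₁, Matrix.smul_mul, Matrix.mul_smul, smul_smul, Matrix.mul_assoc]
    _ = -((s * s) • (s • (Fᵀ * J n * F))) := by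
      simp only [J_mul_J, Matrix.neg_mul, Matrix.one_mul, Matrix.mul_neg, Matrix.neg_mul, smul_neg,
        smul_smul, Matrix.mul_assoc]
    _ = -((s * s) • J n) := by rw [h₂]
  exact smul_left_injective ℝ (J_ne_zero hn) (by simpa using (neg_inj.mp key).symm)

theorem exists_eq_smul_J_of_forall_posDef {n : ℕ} {G : Matrix (Fin n ⊕ Fin n) (Fin n ⊕ Fin n) ℝ}
    (hG : ∀ L : Matrix (Fin n) (Fin n) ℝ, L.PosDef →
      fromBlocks L⁻¹ 0 0 L * G * fromBlocks L⁻¹ 0 0 L = G)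
    (hGt : Gᵀ = -G) : ∃ s : ℝ, G = s • J n := by
  obtain ⟨A, B, C, D, rfl⟩ : ∃ A B C D, G = fromBlocks A B C D :=
    ⟨_, _, _, _, (fromBlocks_toBlocks G).symm⟩
  have hblocks : ∀ L : Matrix (Fin n) (Fin n) ℝ, L.PosDef →
      L⁻¹ * A * L⁻¹ = A ∧ L⁻¹ * B * L = B ∧ L * C * L⁻¹ = C ∧ L * D * L = D := by
    intro L hL
    simpa [fromBlocks_multiply] using hG L hL
  have hA : A = 0 := eq_zero_of_forall_posDef_mul_mul_eq fun L hL ↦ by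
    simpa [nonsing_inv_nonsing_inv L hL.det_pos.ne'.isUnit] using (hblocks L⁻¹ hL.inv).1
  have hD : D = 0 := eq_zero_of_forall_posDef_mul_mul_eq fun L hL ↦ (hblocks L hL).2.2.2
  obtain ⟨s, hB⟩ := exists_eq_smul_one_of_forall_posDef_commute fun L hL ↦
    calc B * L = L * (L⁻¹ * B * L) := by
          rw [← Matrix.mul_assoc, ← Matrix.mul_assoc, mul_nonsing_inv _ hL.det_pos.ne'.isUnit,
            Matrix.one_mul]
      _ = L * B := by rw [(hblocks L hL).2.1]
  have hC : C = -(s • 1) := by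
    have hGt' := hGt
    simp only [hB, fromBlocks_transpose, fromBlocks_neg, fromBlocks_inj, transpose_smul,
      transpose_one] at hGt'
    exact neg_eq_iff_eq_neg.mp hGt'.2.2.1.symm
  exact ⟨s, by simp [_root_.J, hA, hB, hC, hD, fromBlocks_smul]⟩

theorem symplectic_or_antisymplectic {n : ℕ}
    (F : Matrix (Fin n ⊕ Fin n) (Fin n ⊕ Fin n) ℝ) (hF : IsUnit F.det)
    (h : ∀ L : Matrix (Fin n) (Fin n) ℝ, L.PosDef →
      (Fᵀ * fromBlocks L⁻¹ 0 0 L * F)ᵀ * J n * (Fᵀ * fromBlocks L⁻¹ 0 0 L * F) = J n) :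
    Fᵀ * J n * F = J n ∨ Fᵀ * J n * F = -(J n) := by
  rcases n.eq_zero_or_pos with rfl | hn
  · exact Or.inl (Subsingleton.elim _ _)
  set G := F * J n * Fᵀ
  have hFGF : Fᵀ * G * F = J n := by
    simpa [G, transpose_mul, Matrix.mul_assoc] using h 1 PosDef.one
  have hconj : ∀ L : Matrix (Fin n) (Fin n) ℝ, L.PosDef →
      fromBlocks L⁻¹ 0 0 L * G * fromBlocks L⁻¹ 0 0 L = G := fun L hL ↦
    eq_of_transpose_mul_mul_eq hF <| by
      rw [hFGF, ← h L hL]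
      have hLt : Lᵀ = L := isHermitian_iff_isSymm.mp hL.isHermitian
      simp [G, transpose_mul, Matrix.mul_assoc, fromBlocks_transpose, transpose_nonsing_inv, hLt]
  obtain ⟨s, hs⟩ := exists_eq_smul_J_of_forall_posDef hconj
    (by simp [G, _root_.J_transpose, Matrix.mul_assoc])
  have hsFJF : s • (Fᵀ * J n * F) = J n := by
    simpa only [hs, Matrix.mul_smul, Matrix.smul_mul] using hFGF
  rcases mul_self_eq_one_iff.mp (mul_self_eq_one_of_conj_J hn hs hsFJF) with rfl | rfl
  · exact Or.inl (by simpa using hsFJF)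
  · exact Or.inr (by simpa [neg_eq_iff_eq_neg] using hsFJF)
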